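/- Without propositional-equivalence quotienting, the set of formulas reachable from (G a) W (G b) by repeatedly applying the syntactic successor rules under the assignment {a, b} is infinite: iterating the successor under the letter where a and b both hold produces formulas of strictly increasing size. -/

import Mathlib

/-- LTL formulas over atomic propositions `P`. -/
inductive LTL (P : Type) : Type
  | tt : LTL P
  | ff : LTL P
  | atom : P → LTL P
  | not : LTL P → LTL P
  | and : LTL P → LTL P → LTL P
  | or : LTL P → LTL P → LTL P
  | imp : LTL P → LTL P → LTL P
  | iff : LTL P → LTL P → LTL P
  | xor : LTL P → LTL P → LTL P
  | next : LTL P → LTL P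
  | until_ : LTL P → LTL P → LTL P
  | wuntil : LTL P → LTL P → LTL P
  | muntil : LTL P → LTL P → LTL P
  | release : LTL P → LTL P → LTL P
  | ev : LTL P → LTL P
  | always : LTL P → LTL P

namespace LTL

variable {P : Type}

/-- Negation with constant folding. -/
def mkNot : LTL P → LTL P
  | .tt => .ff
  | .ff => .tt
  | φ => .not φ

/-- Conjunction with constant folding. -/
def mkAnd : LTL P → LTL P → LTL P
  | .tt, β => β
  | .ff, _ => .ff
  | α, .tt => α
  | _, .ff => .ff
  | α, β => .and α β

/-- Disjunction with constant folding. -/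
def mkOr : LTL P → LTL P → LTL P
  | .tt, _ => .tt
  | .ff, β => β
  | _, .tt => .tt
  | α, .ff => α
  | α, β => .or α β

/-- Implication with constant folding. -/
def mkImp : LTL P → LTL P → LTL P
  | .ff, _ => .tt
  | .tt, β => β
  | _, .tt => .tt
  | α, .ff => mkNot α
  | α, β => .imp α β

/-- Equivalence with constant folding. -/
def mkIff : LTL P → LTL P → LTL P
  | .tt, β => β
  | .ff, β => mkNot β
  | α, .tt => α
  | α, .ff => mkNot α
  | α, β => .iff α β

/-- Exclusive or with constant folding. -/
def mkXor : LTL P → LTL P → LTL P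
  | .tt, β => mkNot β
  | .ff, β => β
  | α, .tt => mkNot α
  | α, .ff => α
  | α, β => .xor α β

/-- The syntactic successor (local unfolding) of a formula under an
assignment `v` of the atomic propositions. -/
def succ (v : P → Bool) : LTL P → LTL P
  | .tt => .tt
  | .ff => .ff
  | .atom p => if v p then .tt else .ff
  | .not φ => mkNot (succ v φ)
  | .and α β => mkAnd (succ v α) (succ v β)
  | .or α β => mkOr (succ v α) (succ v β)
  | .imp α β => mkImp (succ v α) (succ v β)
  | .iff α β => mkIff (succ v α) (succ v β)
  | .xor α β => mkXor (succ v α) (succ v β)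
  | .next φ => φ
  | .until_ α β => mkOr (succ v β) (mkAnd (succ v α) (.until_ α β))
  | .wuntil α β => mkOr (succ v β) (mkAnd (succ v α) (.wuntil α β))
  | .muntil α β => mkAnd (succ v β) (mkOr (succ v α) (.muntil α β))
  | .release α β => mkAnd (succ v β) (mkOr (succ v α) (.release α β))
  | .ev φ => mkOr (succ v φ) (.ev φ)
  | .always φ => mkAnd (succ v φ) (.always φ)

/-- Boolean evaluation of a formula where every maximal temporal subformula
(and every atomic proposition) is treated as an opaque Boolean variable,
interpreted by `ν`. -/
def evalB (ν : LTL P → Prop) : LTL P → Prop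
  | .tt => True
  | .ff => False
  | .not φ => ¬ evalB ν φ
  | .and α β => evalB ν α ∧ evalB ν β
  | .or α β => evalB ν α ∨ evalB ν β
  | .imp α β => evalB ν α → evalB ν β
  | .iff α β => evalB ν α ↔ evalB ν β
  | .xor α β => ¬ (evalB ν α ↔ evalB ν β)
  | φ => ν φ

/-- Propositional equivalence: the Boolean abstractions (with maximal
temporal subformulas replaced by variables) are logically equivalent. -/
def PropEquiv (α β : LTL P) : Prop := ∀ ν : LTL P → Prop, evalB ν α ↔ evalB ν β

/-! Three-valued acceptance values `some true = ⊤`, `some false = ⊥`,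
`none = *` (wildcard), with the wildcard-absorption tables of the paper. -/

def obNot : Option Bool → Option Bool
  | none => none
  | some b => some (!b)

def obAnd : Option Bool → Option Bool → Option Bool
  | some a, some b => some (a && b)
  | some a, none => some a
  | none, some b => some b
  | none, none => none

def obOr : Option Bool → Option Bool → Option Bool
  | some a, some b => some (a || b)
  | some a, none => some a
  | none, some b => some b
  | none, none => none

def obXor : Option Bool → Option Bool → Option Bool
  | some a, some b => some (a != b)
  | some _, none => some true
  | none, some _ => some true
  | none, none => none

def obIff : Option Bool → Option Bool → Option Bool
  | some a, some b => some (a == b)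
  | some _, none => some true
  | none, some _ => some true
  | none, none => none

def obImp : Option Bool → Option Bool → Option Bool
  | some a, some b => some (!a || b)
  | some true, none => some false
  | some false, none => some true
  | none, some b => some b
  | none, none => none

/-- The acceptance function λ : strong operators (F, U, M) are rejecting (⊥),
weak operators (G, W, R) are accepting (⊤), atoms are wildcards (*),
Boolean connectives are combined with wildcard absorption. -/
def lam : LTL P → Option Bool
  | .tt => some true
  | .ff => some false
  | .atom _ => none
  | .not φ => obNot (lam φ)
  | .and α β => obAnd (lam α) (lam β)
  | .or α β => obOr (lam α) (lam β)
  | .imp α β => obImp (lam α) (lam β)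
  | .iff α β => obIff (lam α) (lam β)
  | .xor α β => obXor (lam α) (lam β)
  | .next φ => lam φ
  | .until_ _ _ => some false
  | .muntil _ _ => some false
  | .ev _ => some false
  | .wuntil _ _ => some true
  | .release _ _ => some true
  | .always _ => some true

def IsConst : LTL P → Prop
  | .tt => True
  | .ff => True
  | _ => False

/-- `tt` and `ff` never occur as proper subformulas. -/
def NoConst : LTL P → Prop
  | .not φ => ¬ IsConst φ ∧ NoConst φ
  | .and α β => (¬ IsConst α ∧ NoConst α) ∧ (¬ IsConst β ∧ NoConst β)
  | .or α β => (¬ IsConst α ∧ NoConst α) ∧ (¬ IsConst β ∧ NoConst β)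
  | .imp α β => (¬ IsConst α ∧ NoConst α) ∧ (¬ IsConst β ∧ NoConst β)
  | .iff α β => (¬ IsConst α ∧ NoConst α) ∧ (¬ IsConst β ∧ NoConst β)
  | .xor α β => (¬ IsConst α ∧ NoConst α) ∧ (¬ IsConst β ∧ NoConst β)
  | .next φ => ¬ IsConst φ ∧ NoConst φ
  | .until_ α β => (¬ IsConst α ∧ NoConst α) ∧ (¬ IsConst β ∧ NoConst β)
  | .wuntil α β => (¬ IsConst α ∧ NoConst α) ∧ (¬ IsConst β ∧ NoConst β)
  | .muntil α β => (¬ IsConst α ∧ NoConst α) ∧ (¬ IsConst β ∧ NoConst β)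
  | .release α β => (¬ IsConst α ∧ NoConst α) ∧ (¬ IsConst β ∧ NoConst β)
  | .ev φ => ¬ IsConst φ ∧ NoConst φ
  | .always φ => ¬ IsConst φ ∧ NoConst φ
  | _ => True

/-- The "bottom" class `φ_B`: Boolean combinations of atomic propositions,
constants, possibly with `X`. -/
inductive IsB : LTL P → Prop
  | tt : IsB .tt
  | ff : IsB .ff
  | atom (p : P) : IsB (.atom p)
  | not {φ} : IsB φ → IsB (.not φ)
  | and {α β} : IsB α → IsB β → IsB (.and α β)
  | or {α β} : IsB α → IsB β → IsB (.or α β)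
  | imp {α β} : IsB α → IsB β → IsB (.imp α β)
  | iff {α β} : IsB α → IsB β → IsB (.iff α β)
  | xor {α β} : IsB α → IsB β → IsB (.xor α β)
  | next {φ} : IsB φ → IsB (.next φ)

mutual
/-- Syntactic guarantee formulas `φ_G`. -/
inductive IsG : LTL P → Prop
  | ofB {φ} : IsB φ → IsG φ
  | notS {φ} : IsS φ → IsG (.not φ)
  | and {α β} : IsG α → IsG β → IsG (.and α β)
  | or {α β} : IsG α → IsG β → IsG (.or α β)
  | impS {α β} : IsS α → IsG β → IsG (.imp α β)
  | next {φ} : IsG φ → IsG (.next φ)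
  | ev {φ} : IsG φ → IsG (.ev φ)
  | until_ {α β} : IsG α → IsG β → IsG (.until_ α β)
  | muntil {α β} : IsG α → IsG β → IsG (.muntil α β)

/-- Syntactic safety formulas `φ_S`. -/
inductive IsS : LTL P → Prop
  | ofB {φ} : IsB φ → IsS φ
  | notG {φ} : IsG φ → IsS (.not φ)
  | and {α β} : IsS α → IsS β → IsS (.and α β)
  | or {α β} : IsS α → IsS β → IsS (.or α β)
  | impG {α β} : IsG α → IsS β → IsS (.imp α β)
  | next {φ} : IsS φ → IsS (.next φ)
  | always {φ} : IsS φ → IsS (.always φ)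
  | release {α β} : IsS α → IsS β → IsS (.release α β)
  | wuntil {α β} : IsS α → IsS β → IsS (.wuntil α β)
end

/-- Syntactic obligation formulas `φ_O`. -/
inductive IsO : LTL P → Prop
  | ofG {φ} : IsG φ → IsO φ
  | ofS {φ} : IsS φ → IsO φ
  | not {φ} : IsO φ → IsO (.not φ)
  | and {α β} : IsO α → IsO β → IsO (.and α β)
  | or {α β} : IsO α → IsO β → IsO (.or α β)
  | imp {α β} : IsO α → IsO β → IsO (.imp α β)
  | iff {α β} : IsO α → IsO β → IsO (.iff α β)
  | xor {α β} : IsO α → IsO β → IsO (.xor α β)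
  | next {φ} : IsO φ → IsO (.next φ)
  | untilG {α β} : IsO α → IsG β → IsO (.until_ α β)
  | releaseS {α β} : IsO α → IsS β → IsO (.release α β)
  | wuntilO {α β} : IsS α → IsO β → IsO (.wuntil α β)
  | muntilO {α β} : IsG α → IsO β → IsO (.muntil α β)

/-- Raw successor relation (no quotienting). -/
def StepRaw (α β : LTL P) : Prop := ∃ v : P → Bool, succ v α = β

/-- Successor relation of the construction: the raw successor is replaced by
the representative `rep` of its propositional-equivalence class. -/
def StepRep (rep : LTL P → LTL P) (α β : LTL P) : Prop :=
  ∃ v : P → Bool, rep (succ v α) = β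

/-- Hypotheses making `rep` a legitimate choice of representatives of
propositional-equivalence classes for the automaton `D_ι`: `rep` picks a
propositionally equivalent formula, constantly on each class, the constants
are canonical, and every state of `D_ι` is (except for `ι` and the constants)
a formula actually produced by the unfolding `succ` from `ι`. -/
def GoodRep (rep : LTL P → LTL P) (ι : LTL P) : Prop :=
  (∀ α, PropEquiv (rep α) α) ∧
  (∀ α β, PropEquiv α β → rep α = rep β) ∧
  (rep .tt = .tt) ∧ (rep .ff = .ff) ∧
  (∀ φ, Relation.ReflTransGen (StepRep rep) ι φ →
      φ = ι ∨ φ = .tt ∨ φ = .ff ∨ Relation.ReflTransGen StepRaw ι φ)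

/-- Shift of an infinite word. -/
def shiftw (w : ℕ → (P → Prop)) (k : ℕ) : ℕ → (P → Prop) := fun n => w (n + k)

/-- Standard LTL semantics over infinite words. -/
def Sat : (ℕ → (P → Prop)) → LTL P → Prop
  | _, .tt => True
  | _, .ff => False
  | w, .atom p => w 0 p
  | w, .not φ => ¬ Sat w φ
  | w, .and α β => Sat w α ∧ Sat w β
  | w, .or α β => Sat w α ∨ Sat w β
  | w, .imp α β => Sat w α → Sat w β
  | w, .iff α β => Sat w α ↔ Sat w β
  | w, .xor α β => ¬ (Sat w α ↔ Sat w β)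
  | w, .next φ => Sat (shiftw w 1) φ
  | w, .until_ α β => ∃ i, Sat (shiftw w i) β ∧ ∀ j < i, Sat (shiftw w j) α
  | w, .wuntil α β =>
      (∃ i, Sat (shiftw w i) β ∧ ∀ j < i, Sat (shiftw w j) α) ∨ ∀ i, Sat (shiftw w i) α
  | w, .muntil α β =>
      ∃ i, (Sat (shiftw w i) α ∧ Sat (shiftw w i) β) ∧ ∀ j < i, Sat (shiftw w j) β
  | w, .release α β => ∀ i, Sat (shiftw w i) β ∨ ∃ j < i, Sat (shiftw w j) α
  | w, .ev φ => ∃ i, Sat (shiftw w i) φ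
  | w, .always φ => ∀ i, Sat (shiftw w i) φ

/-- X-nesting depth. -/
def xdepth : LTL P → ℕ
  | .not φ => xdepth φ
  | .and α β => max (xdepth α) (xdepth β)
  | .or α β => max (xdepth α) (xdepth β)
  | .imp α β => max (xdepth α) (xdepth β)
  | .iff α β => max (xdepth α) (xdepth β)
  | .xor α β => max (xdepth α) (xdepth β)
  | .next φ => xdepth φ + 1
  | _ => 0

/-- Size of a formula. -/
def size : LTL P → ℕ
  | .tt => 1
  | .ff => 1
  | .atom _ => 1
  | .not φ => size φ + 1
  | .and α β => size α + size β + 1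
  | .or α β => size α + size β + 1
  | .imp α β => size α + size β + 1
  | .iff α β => size α + size β + 1
  | .xor α β => size α + size β + 1
  | .next φ => size φ + 1
  | .until_ α β => size α + size β + 1
  | .wuntil α β => size α + size β + 1
  | .muntil α β => size α + size β + 1
  | .release α β => size α + size β + 1
  | .ev φ => size φ + 1
  | .always φ => size φ + 1

/-- Iterated application of the syntactic successor. -/
def iterSucc (vs : ℕ → P → Bool) (φ : LTL P) : ℕ → LTL P
  | 0 => φ
  | n + 1 => succ (vs n) (iterSucc vs φ n)

/-- The run of the automaton `D_ι` (with representative function `rep`) on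
the infinite word `w`. -/
def runRep (rep : LTL P → LTL P) (ι : LTL P) (w : ℕ → P → Bool) : ℕ → LTL P
  | 0 => ι
  | n + 1 => rep (succ (w n) (runRep rep ι w n))

end LTL

/-- `φ₁ = (G a) W (G b)` over atoms `a = atom 0`, `b = atom 1`. -/
def phi1 : LTL (Fin 2) := .wuntil (.always (.atom 0)) (.always (.atom 1))

/-- The assignment `{a, b}` where both atoms hold. -/
def vab : Fin 2 → Bool := fun _ => true

/-!
Since `G a` and `G b` are fixed points of the successor under `{a, b}`, the unfolding
`succ (α W β) = β ∨ (α ∧ α W β)` never folds away: each further successor rebuilds the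
previous formula `χ` as `β ∨ (α ∧ χ)`, so the size grows by `|α| + |β| + 2` at every step.
-/

namespace LTL

variable {P : Type}

theorem mkAnd_eq_and {α β : LTL P} (hα : ¬ IsConst α) (hβ : ¬ IsConst β) :
    mkAnd α β = .and α β := by
  unfold mkAnd
  split <;> simp_all [IsConst]

theorem mkOr_eq_or {α β : LTL P} (hα : ¬ IsConst α) (hβ : ¬ IsConst β) :
    mkOr α β = .or α β := by
  unfold mkOr
  split <;> simp_all [IsConst]

theorem succ_always_eq_self {v : P → Bool} {ψ : LTL P} (h : succ v ψ = .tt) :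
    succ v (.always ψ) = .always ψ := by
  simp only [succ, h, mkAnd]

section WeakUntil

variable {v : P → Bool} {α β : LTL P}

theorem iterSucc_wuntil_succ (hα : succ v α = α) (hβ : succ v β = β)
    (hα' : ¬ IsConst α) (hβ' : ¬ IsConst β) (n : ℕ) :
    iterSucc (fun _ => v) (.wuntil α β) (n + 1) =
      .or β (.and α (iterSucc (fun _ => v) (.wuntil α β) n)) := by
  induction n with
  | zero =>
    simp only [iterSucc, succ, hα, hβ]
    rw [mkAnd_eq_and hα' (by simp [IsConst]), mkOr_eq_or hβ' (by simp [IsConst])]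
  | succ n ih =>
    rw [iterSucc, ih]
    show mkOr (succ v β) (mkAnd (succ v α) (iterSucc (fun _ => v) (.wuntil α β) (n + 1))) = _
    rw [hα, hβ, ih, mkAnd_eq_and hα' (by simp [IsConst]),
      mkOr_eq_or hβ' (by simp [IsConst])]

theorem size_iterSucc_wuntil_succ (hα : succ v α = α) (hβ : succ v β = β)
    (hα' : ¬ IsConst α) (hβ' : ¬ IsConst β) (n : ℕ) :
    size (iterSucc (fun _ => v) (.wuntil α β) (n + 1)) =
      size (iterSucc (fun _ => v) (.wuntil α β) n) + size α + size β + 2 := by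
  rw [iterSucc_wuntil_succ hα hβ hα' hβ', size, size]
  ring

theorem strictMono_size_iterSucc_wuntil (hα : succ v α = α) (hβ : succ v β = β)
    (hα' : ¬ IsConst α) (hβ' : ¬ IsConst β) :
    StrictMono fun n => size (iterSucc (fun _ => v) (.wuntil α β) n) :=
  strictMono_nat_of_lt_succ fun n => by
    rw [size_iterSucc_wuntil_succ hα hβ hα' hβ']
    omega

end WeakUntil

end LTL

/-- without propositional-equivalence quotienting, iterating the
syntactic successor of `φ₁ = (G a) W (G b)` under the letter `{a, b}` produces
formulas of strictly increasing size; hence the set of formulas reachable this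
way is infinite. -/
theorem stmt7 :
    (∀ k : ℕ, LTL.size (LTL.iterSucc (fun _ => vab) phi1 k) <
      LTL.size (LTL.iterSucc (fun _ => vab) phi1 (k + 1))) ∧
    (Set.range fun k : ℕ => LTL.iterSucc (fun _ => vab) phi1 k).Infinite := by
  have hGa : LTL.succ vab (.always (.atom 0)) = .always (.atom 0) :=
    LTL.succ_always_eq_self rfl
  have hGb : LTL.succ vab (.always (.atom 1)) = .always (.atom 1) :=
    LTL.succ_always_eq_self rfl
  have hmono := LTL.strictMono_size_iterSucc_wuntil hGa hGb
    (by simp [LTL.IsConst]) (by simp [LTL.IsConst])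
  exact ⟨fun k => hmono k.lt_succ_self,
    Set.infinite_range_of_injective hmono.injective.of_comp⟩
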